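/- Let X, X', Y, Z be finite-valued random variables such that I(Y; Z | (X, X')) = 0 (Z is a representation of X), the views X and X' are mutually redundant for Y (i.e., I(Y; X | X') = 0 and I(Y; X' | X) = 0), and Z is sufficient for X' (i.e., I(X; X' | Z) = 0). Then I(Y; Z) = I(Y; (X, X')), i.e., Z is as predictive for Y as the combination of the two views. -/

import Mathlib

/-
Discrete probability setup: a finite sample space `Ω` with weight function `p`
(nonnegative, summing to 1).  Random variables are functions out of `Ω` into
nonempty finite sets.  `pr p X x = P(X = x)`, `ent` is Shannon entropy
(natural log, with `0 · log 0 = 0` since `Real.log 0 = 0`), `mi` is mutual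
information `I(X;Y) = H(X) + H(Y) - H(X,Y)`, and `cmi` is conditional mutual
information `I(X;Y|W) = ∑ w, P(W=w) · I(X;Y | W=w)` computed with respect to
the conditional distribution `condp p W w` (terms with `P(W=w)=0` vanish).
`klDivF` is the discrete Kullback–Leibler divergence with the convention that
terms with `p s = 0` contribute `0` (indeed `0 * log 0 = 0` in Lean).
-/

open scoped Classical
open Finset

noncomputable def pr {Ω α : Type*} [Fintype Ω] (p : Ω → ℝ) (X : Ω → α) (x : α) : ℝ :=
  ∑ ω, if X ω = x then p ω else 0

noncomputable def ent {Ω α : Type*} [Fintype Ω] [Fintype α] (p : Ω → ℝ) (X : Ω → α) : ℝ :=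
  -∑ x, pr p X x * Real.log (pr p X x)

noncomputable def mi {Ω α β : Type*} [Fintype Ω] [Fintype α] [Fintype β]
    (p : Ω → ℝ) (X : Ω → α) (Y : Ω → β) : ℝ :=
  ent p X + ent p Y - ent p (fun ω => (X ω, Y ω))

noncomputable def condp {Ω γ : Type*} [Fintype Ω] (p : Ω → ℝ) (W : Ω → γ) (w : γ) : Ω → ℝ :=
  fun ω => if W ω = w then p ω / pr p W w else 0

noncomputable def cmi {Ω α β γ : Type*} [Fintype Ω] [Fintype α] [Fintype β] [Fintype γ]
    (p : Ω → ℝ) (X : Ω → α) (Y : Ω → β) (W : Ω → γ) : ℝ :=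
  ∑ w, pr p W w * mi (condp p W w) X Y

noncomputable def klDivF {S : Type*} [Fintype S] (p q : S → ℝ) : ℝ :=
  ∑ s, p s * Real.log (p s / q s)

section Aux
variable {Ω α β γ : Type*} [Fintype Ω]

lemma pr_nonneg {p : Ω → ℝ} (hp : ∀ ω, 0 ≤ p ω) (X : Ω → α) (x : α) :
    0 ≤ pr p X x :=
  Finset.sum_nonneg fun ω _ => by by_cases h : X ω = x <;> simp [h, hp ω]

lemma sum_pr [Fintype α] (p : Ω → ℝ) (X : Ω → α) : ∑ x, pr p X x = ∑ ω, p ω := by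
  unfold pr
  rw [Finset.sum_comm]
  exact Finset.sum_congr rfl fun ω _ => by simp

lemma pr_pair_left [Fintype γ] (p : Ω → ℝ) (A : Ω → α) (W : Ω → γ) (a : α) :
    ∑ w, pr p (fun ω => (A ω, W ω)) (a, w) = pr p A a := by
  unfold pr
  rw [Finset.sum_comm]
  refine Finset.sum_congr rfl fun ω _ => ?_
  by_cases h : A ω = a <;> simp [Prod.ext_iff, h]

lemma pr_pair_right [Fintype α] (p : Ω → ℝ) (A : Ω → α) (W : Ω → γ) (w : γ) :
    ∑ a, pr p (fun ω => (A ω, W ω)) (a, w) = pr p W w := by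
  unfold pr
  rw [Finset.sum_comm]
  refine Finset.sum_congr rfl fun ω _ => ?_
  by_cases h : W ω = w <;> simp [Prod.ext_iff, h]

lemma pr_pair_le_left {p : Ω → ℝ} (hp : ∀ ω, 0 ≤ p ω) (A : Ω → α) (W : Ω → γ) (a : α) (w : γ) :
    pr p (fun ω => (A ω, W ω)) (a, w) ≤ pr p A a :=
  Finset.sum_le_sum fun ω _ => by
    by_cases h : A ω = a <;> by_cases h' : W ω = w <;> simp [Prod.ext_iff, h, h', hp ω]

lemma pr_pair_le_right {p : Ω → ℝ} (hp : ∀ ω, 0 ≤ p ω) (A : Ω → α) (W : Ω → γ) (a : α) (w : γ) :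
    pr p (fun ω => (A ω, W ω)) (a, w) ≤ pr p W w :=
  Finset.sum_le_sum fun ω _ => by
    by_cases h : A ω = a <;> by_cases h' : W ω = w <;> simp [Prod.ext_iff, h, h', hp ω]

lemma pr_comp_eq {p : Ω → ℝ} (X : Ω → α) {f : α → β} (hf : Function.Injective f) (x : α) :
    pr p (fun ω => f (X ω)) (f x) = pr p X x :=
  Finset.sum_congr rfl fun ω _ => by simp [hf.eq_iff]

lemma pr_comp_ne {p : Ω → ℝ} (X : Ω → α) (f : α → β) {y : β} (hy : ∀ x, f x ≠ y) :
    pr p (fun ω => f (X ω)) y = 0 :=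
  Finset.sum_eq_zero fun ω _ => by simp [hy (X ω)]

lemma ent_comp [Fintype α] [Fintype β] (p : Ω → ℝ) (X : Ω → α) (f : α → β)
    (hf : Function.Injective f) :
    ent p (fun ω => f (X ω)) = ent p X := by
  unfold ent
  congr 1
  have h0 : ∀ y ∈ (univ : Finset β), y ∉ univ.image f →
      pr p (fun ω => f (X ω)) y * Real.log (pr p (fun ω => f (X ω)) y) = 0 := by
    intro y _ hy
    rw [pr_comp_ne X f (fun x hx => hy (Finset.mem_image.2 ⟨x, Finset.mem_univ x, hx⟩))]
    simp
  rw [← Finset.sum_subset (Finset.subset_univ (univ.image f)) h0,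
      Finset.sum_image (fun a _ b _ h => hf h)]
  exact Finset.sum_congr rfl fun x _ => by rw [pr_comp_eq X hf]

lemma mi_nonneg [Fintype α] [Fintype β] {p : Ω → ℝ} (hp : ∀ ω, 0 ≤ p ω)
    (hsum : ∑ ω, p ω = 1) (X : Ω → α) (Y : Ω → β) : 0 ≤ mi p X Y := by
  have expand : mi p X Y = ∑ x, ∑ y,
      (pr p (fun ω => (X ω, Y ω)) (x, y) * Real.log (pr p (fun ω => (X ω, Y ω)) (x, y))
        - pr p (fun ω => (X ω, Y ω)) (x, y) * Real.log (pr p X x)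
        - pr p (fun ω => (X ω, Y ω)) (x, y) * Real.log (pr p Y y)) := by
    unfold mi ent
    rw [Fintype.sum_prod_type]
    have e1 : ∑ x, pr p X x * Real.log (pr p X x)
        = ∑ x, ∑ y, pr p (fun ω => (X ω, Y ω)) (x, y) * Real.log (pr p X x) :=
      Finset.sum_congr rfl fun x _ => by rw [← Finset.sum_mul, pr_pair_left]
    have e2 : ∑ y, pr p Y y * Real.log (pr p Y y)
        = ∑ x, ∑ y, pr p (fun ω => (X ω, Y ω)) (x, y) * Real.log (pr p Y y) := by
      rw [Finset.sum_comm]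
      exact Finset.sum_congr rfl fun y _ => by rw [← Finset.sum_mul, pr_pair_right]
    rw [e1, e2]
    simp [Finset.sum_sub_distrib]
    ring
  have key : ∀ x y, pr p (fun ω => (X ω, Y ω)) (x, y) - pr p X x * pr p Y y ≤
      pr p (fun ω => (X ω, Y ω)) (x, y) * Real.log (pr p (fun ω => (X ω, Y ω)) (x, y))
        - pr p (fun ω => (X ω, Y ω)) (x, y) * Real.log (pr p X x)
        - pr p (fun ω => (X ω, Y ω)) (x, y) * Real.log (pr p Y y) := by
    intro x y
    set J := pr p (fun ω => (X ω, Y ω)) (x, y) with hJdef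
    rcases eq_or_ne J 0 with h0 | h0
    · rw [h0]
      have := mul_nonneg (pr_nonneg hp X x) (pr_nonneg hp Y y)
      simp
      linarith
    · have hJpos : 0 < J := lt_of_le_of_ne (pr_nonneg hp _ _) (Ne.symm h0)
      have hA : 0 < pr p X x := lt_of_lt_of_le hJpos (pr_pair_le_left hp X Y x y)
      have hB : 0 < pr p Y y := lt_of_lt_of_le hJpos (pr_pair_le_right hp X Y x y)
      have hre : J * Real.log J - J * Real.log (pr p X x) - J * Real.log (pr p Y y)
          = -(J * Real.log (pr p X x * pr p Y y / J)) := by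
        rw [Real.log_div (by positivity) h0, Real.log_mul hA.ne' hB.ne']; ring
      have hlog : Real.log (pr p X x * pr p Y y / J) ≤ pr p X x * pr p Y y / J - 1 :=
        Real.log_le_sub_one_of_pos (by positivity)
      have h2 : J * (pr p X x * pr p Y y / J) = pr p X x * pr p Y y := by
        field_simp
      nlinarith [mul_le_mul_of_nonneg_left hlog hJpos.le]
  have hJ1 : ∑ x, ∑ y, pr p (fun ω => (X ω, Y ω)) (x, y) = 1 := by
    rw [Finset.sum_congr rfl (fun x _ => pr_pair_left p X Y x), sum_pr, hsum]
  have hab : ∑ x, ∑ y, pr p X x * pr p Y y = 1 := by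
    simp_rw [← Finset.mul_sum]
    rw [← Finset.sum_mul, sum_pr, sum_pr, hsum]
    norm_num
  have hmono := Finset.sum_le_sum (s := (univ : Finset α))
    (fun x _ => Finset.sum_le_sum (s := (univ : Finset β)) fun y _ => key x y)
  have hzero : ∑ x, ∑ y, (pr p (fun ω => (X ω, Y ω)) (x, y) - pr p X x * pr p Y y) = 0 := by
    simp only [Finset.sum_sub_distrib]
    rw [hJ1, hab]
    norm_num
  rw [expand]
  linarith [hmono, hzero]

lemma condp_nonneg {p : Ω → ℝ} (hp : ∀ ω, 0 ≤ p ω) (W : Ω → γ) (w : γ) (ω : Ω) :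
    0 ≤ condp p W w ω := by
  unfold condp
  split
  · exact div_nonneg (hp ω) (pr_nonneg hp W w)
  · exact le_refl 0

lemma condp_sum {p : Ω → ℝ} (W : Ω → γ) (w : γ) (h : pr p W w ≠ 0) :
    ∑ ω, condp p W w ω = 1 := by
  unfold condp
  have e : ∀ ω, (if W ω = w then p ω / pr p W w else 0)
      = (if W ω = w then p ω else 0) / pr p W w := fun ω => by split <;> simp
  simp_rw [e, ← Finset.sum_div]
  rw [show (∑ ω, if W ω = w then p ω else 0) = pr p W w from rfl]
  exact div_self h

lemma cmi_nonneg [Fintype α] [Fintype β] [Fintype γ] {p : Ω → ℝ} (hp : ∀ ω, 0 ≤ p ω)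
    (A : Ω → α) (B : Ω → β) (W : Ω → γ) : 0 ≤ cmi p A B W := by
  refine Finset.sum_nonneg fun w _ => ?_
  rcases eq_or_ne (pr p W w) 0 with h | h
  · simp [h]
  · exact mul_nonneg (pr_nonneg hp W w)
      (mi_nonneg (condp_nonneg hp W w) (condp_sum W w h) A B)

lemma pr_condp (p : Ω → ℝ) (W : Ω → γ) (w : γ) (A : Ω → α) (a : α) :
    pr (condp p W w) A a = pr p (fun ω => (A ω, W ω)) (a, w) / pr p W w := by
  unfold pr condp
  rw [Finset.sum_div]
  refine Finset.sum_congr rfl fun ω _ => ?_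
  by_cases h1 : A ω = a <;> by_cases h2 : W ω = w <;> simp [h1, h2, Prod.ext_iff, pr]

lemma cond_ent [Fintype α] [Fintype γ] {p : Ω → ℝ} (hp : ∀ ω, 0 ≤ p ω)
    (A : Ω → α) (W : Ω → γ) :
    ∑ w, pr p W w * ent (condp p W w) A
      = ent p (fun ω => (A ω, W ω)) - ent p W := by
  have main : ∀ w a, pr p W w * (pr (condp p W w) A a * Real.log (pr (condp p W w) A a))
      = pr p (fun ω => (A ω, W ω)) (a, w) * Real.log (pr p (fun ω => (A ω, W ω)) (a, w))
        - pr p (fun ω => (A ω, W ω)) (a, w) * Real.log (pr p W w) := by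
    intro w a
    rw [pr_condp]
    by_cases hw : pr p W w = 0
    · have hJ : pr p (fun ω => (A ω, W ω)) (a, w) = 0 :=
        le_antisymm (hw ▸ pr_pair_le_right hp A W a w) (pr_nonneg hp _ _)
      simp [hw, hJ]
    · by_cases hJ : pr p (fun ω => (A ω, W ω)) (a, w) = 0
      · simp [hJ]
      · rw [Real.log_div hJ hw]
        field_simp
  have lhs_eq : ∑ w, pr p W w * ent (condp p W w) A
      = -∑ w, ∑ a, (pr p (fun ω => (A ω, W ω)) (a, w) * Real.log (pr p (fun ω => (A ω, W ω)) (a, w))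
          - pr p (fun ω => (A ω, W ω)) (a, w) * Real.log (pr p W w)) := by
    rw [← Finset.sum_neg_distrib]
    refine Finset.sum_congr rfl fun w _ => ?_
    unfold ent
    rw [mul_neg, Finset.mul_sum]
    exact congrArg Neg.neg (Finset.sum_congr rfl fun a _ => main w a)
  rw [lhs_eq]
  simp only [Finset.sum_sub_distrib]
  have t1 : ∑ w, ∑ a, pr p (fun ω => (A ω, W ω)) (a, w) * Real.log (pr p (fun ω => (A ω, W ω)) (a, w))
      = -ent p (fun ω => (A ω, W ω)) := by
    unfold ent
    rw [Fintype.sum_prod_type, Finset.sum_comm]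
    simp
  have t2 : ∑ w, ∑ a, pr p (fun ω => (A ω, W ω)) (a, w) * Real.log (pr p W w)
      = -ent p W := by
    unfold ent
    rw [neg_neg]
    exact Finset.sum_congr rfl fun w _ => by rw [← Finset.sum_mul, pr_pair_right]
  rw [t1, t2]
  ring

lemma cmi_ent [Fintype α] [Fintype β] [Fintype γ] {p : Ω → ℝ} (hp : ∀ ω, 0 ≤ p ω)
    (A : Ω → α) (B : Ω → β) (W : Ω → γ) :
    cmi p A B W = ent p (fun ω => (A ω, W ω)) + ent p (fun ω => (B ω, W ω))
      - ent p W - ent p (fun ω => (A ω, B ω, W ω)) := by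
  have hassoc : ent p (fun ω => (A ω, B ω, W ω)) = ent p (fun ω => ((A ω, B ω), W ω)) :=
    ent_comp p (fun ω => ((A ω, B ω), W ω)) (fun q => (q.1.1, q.1.2, q.2))
      (by intro q r h; simp only [Prod.mk.injEq] at h; simp [Prod.ext_iff]; tauto)
  unfold cmi mi
  simp only [mul_add, mul_sub]
  rw [Finset.sum_sub_distrib, Finset.sum_add_distrib,
      cond_ent hp A W, cond_ent hp B W, cond_ent hp (fun ω => (A ω, B ω)) W, hassoc]
  ring

end Aux

/-- If `Z` is a representation of `X` (`I(Y;Z|(X,X')) = 0`),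
the views `X, X'` are mutually redundant for `Y` (`I(Y;X|X') = 0` and
`I(Y;X'|X) = 0`), and `Z` is sufficient for `X'` (`I(X;X'|Z) = 0`), then
`I(Y;Z) = I(Y;(X,X'))`. -/
theorem mi_eq_joint_views
    {Ω 𝒳 𝒳' 𝒴 𝒵 : Type*} [Fintype Ω] [Fintype 𝒳] [Fintype 𝒳'] [Fintype 𝒴] [Fintype 𝒵]
    [Nonempty 𝒳] [Nonempty 𝒳'] [Nonempty 𝒴] [Nonempty 𝒵]
    (p : Ω → ℝ) (hp : ∀ ω, 0 ≤ p ω) (hsum : ∑ ω, p ω = 1)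
    (X : Ω → 𝒳) (X' : Ω → 𝒳') (Y : Ω → 𝒴) (Z : Ω → 𝒵)
    (hrep : cmi p Y Z (fun ω => (X ω, X' ω)) = 0)
    (hred₁ : cmi p Y X X' = 0)
    (hred₂ : cmi p Y X' X = 0)
    (hsuf : cmi p X X' Z = 0) :
    mi p Y Z = mi p Y (fun ω => (X ω, X' ω)) := by
  -- relabeling equalities between entropies of rearranged tuples
  have r1 : ent p (fun ω => (X' ω, X ω)) = ent p (fun ω => (X ω, X' ω)) :=
    ent_comp p (fun ω => (X ω, X' ω)) (fun q => (q.2, q.1))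
      (by intro q r h; simp only [Prod.mk.injEq] at h; simp [Prod.ext_iff]; tauto)
  have r2 : ent p (fun ω => (Y ω, X' ω, X ω)) = ent p (fun ω => (Y ω, X ω, X' ω)) :=
    ent_comp p (fun ω => (Y ω, X ω, X' ω)) (fun q => (q.1, q.2.2, q.2.1))
      (by intro q r h; simp only [Prod.mk.injEq] at h; simp [Prod.ext_iff]; tauto)
  have r3 : ent p (fun ω => (X ω, Z ω)) = ent p (fun ω => (Z ω, X ω)) :=
    ent_comp p (fun ω => (Z ω, X ω)) (fun q => (q.2, q.1))
      (by intro q r h; simp only [Prod.mk.injEq] at h; simp [Prod.ext_iff]; tauto)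
  have r4 : ent p (fun ω => (X' ω, Z ω)) = ent p (fun ω => (Z ω, X' ω)) :=
    ent_comp p (fun ω => (Z ω, X' ω)) (fun q => (q.2, q.1))
      (by intro q r h; simp only [Prod.mk.injEq] at h; simp [Prod.ext_iff]; tauto)
  have r5 : ent p (fun ω => (X ω, X' ω, Z ω)) = ent p (fun ω => (Z ω, X ω, X' ω)) :=
    ent_comp p (fun ω => (Z ω, X ω, X' ω)) (fun q => (q.2.1, q.2.2, q.1))
      (by intro q r h; simp only [Prod.mk.injEq] at h; simp [Prod.ext_iff]; tauto)
  have r6 : ent p (fun ω => (X ω, Z ω, X' ω)) = ent p (fun ω => (Z ω, X ω, X' ω)) :=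
    ent_comp p (fun ω => (Z ω, X ω, X' ω)) (fun q => (q.2.1, q.1, q.2.2))
      (by intro q r h; simp only [Prod.mk.injEq] at h; simp [Prod.ext_iff]; tauto)
  have r7 : ent p (fun ω => (Y ω, X ω, Z ω, X' ω)) = ent p (fun ω => (Y ω, Z ω, X ω, X' ω)) :=
    ent_comp p (fun ω => (Y ω, Z ω, X ω, X' ω)) (fun q => (q.1, q.2.2.1, q.2.1, q.2.2.2))
      (by intro q r h; simp only [Prod.mk.injEq] at h; simp [Prod.ext_iff]; tauto)
  have r8 : ent p (fun ω => (X' ω, Z ω, X ω)) = ent p (fun ω => (Z ω, X ω, X' ω)) :=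
    ent_comp p (fun ω => (Z ω, X ω, X' ω)) (fun q => (q.2.2, q.1, q.2.1))
      (by intro q r h; simp only [Prod.mk.injEq] at h; simp [Prod.ext_iff]; tauto)
  have r9 : ent p (fun ω => (Y ω, X' ω, Z ω, X ω)) = ent p (fun ω => (Y ω, Z ω, X ω, X' ω)) :=
    ent_comp p (fun ω => (Y ω, Z ω, X ω, X' ω)) (fun q => (q.1, q.2.2.2, q.2.1, q.2.2.1))
      (by intro q r h; simp only [Prod.mk.injEq] at h; simp [Prod.ext_iff]; tauto)
  have r10 : ent p (fun ω => (X' ω, Y ω, Z ω)) = ent p (fun ω => (Y ω, Z ω, X' ω)) :=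
    ent_comp p (fun ω => (Y ω, Z ω, X' ω)) (fun q => (q.2.2, q.1, q.2.1))
      (by intro q r h; simp only [Prod.mk.injEq] at h; simp [Prod.ext_iff]; tauto)
  have r12 : ent p (fun ω => (X ω, Y ω, Z ω)) = ent p (fun ω => (Y ω, Z ω, X ω)) :=
    ent_comp p (fun ω => (Y ω, Z ω, X ω)) (fun q => (q.2.2, q.1, q.2.1))
      (by intro q r h; simp only [Prod.mk.injEq] at h; simp [Prod.ext_iff]; tauto)
  have r13 : ent p (fun ω => (X' ω, X ω, Y ω, Z ω)) = ent p (fun ω => (Y ω, Z ω, X ω, X' ω)) :=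
    ent_comp p (fun ω => (Y ω, Z ω, X ω, X' ω)) (fun q => (q.2.2.2, q.2.2.1, q.1, q.2.1))
      (by intro q r h; simp only [Prod.mk.injEq] at h; simp [Prod.ext_iff]; tauto)
  -- entropy expressions for the conditional mutual informations
  have z1 : cmi p Y Z (fun ω => (X ω, X' ω))
      = ent p (fun ω => (Y ω, X ω, X' ω)) + ent p (fun ω => (Z ω, X ω, X' ω))
        - ent p (fun ω => (X ω, X' ω)) - ent p (fun ω => (Y ω, Z ω, X ω, X' ω)) :=
    cmi_ent hp Y Z _
  have z2 : cmi p Y X X'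
      = ent p (fun ω => (Y ω, X' ω)) + ent p (fun ω => (X ω, X' ω))
        - ent p X' - ent p (fun ω => (Y ω, X ω, X' ω)) :=
    cmi_ent hp Y X X'
  have z3 : cmi p Y X' X
      = ent p (fun ω => (Y ω, X ω)) + ent p (fun ω => (X' ω, X ω))
        - ent p X - ent p (fun ω => (Y ω, X' ω, X ω)) :=
    cmi_ent hp Y X' X
  have z4 : cmi p X X' Z
      = ent p (fun ω => (X ω, Z ω)) + ent p (fun ω => (X' ω, Z ω))
        - ent p Z - ent p (fun ω => (X ω, X' ω, Z ω)) :=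
    cmi_ent hp X X' Z
  have w1 : cmi p Y Z X'
      = ent p (fun ω => (Y ω, X' ω)) + ent p (fun ω => (Z ω, X' ω))
        - ent p X' - ent p (fun ω => (Y ω, Z ω, X' ω)) :=
    cmi_ent hp Y Z X'
  have w2 : cmi p Y X (fun ω => (Z ω, X' ω))
      = ent p (fun ω => (Y ω, Z ω, X' ω)) + ent p (fun ω => (X ω, Z ω, X' ω))
        - ent p (fun ω => (Z ω, X' ω)) - ent p (fun ω => (Y ω, X ω, Z ω, X' ω)) :=
    cmi_ent hp Y X _
  have w3 : cmi p Y Z X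
      = ent p (fun ω => (Y ω, X ω)) + ent p (fun ω => (Z ω, X ω))
        - ent p X - ent p (fun ω => (Y ω, Z ω, X ω)) :=
    cmi_ent hp Y Z X
  have w4 : cmi p Y X' (fun ω => (Z ω, X ω))
      = ent p (fun ω => (Y ω, Z ω, X ω)) + ent p (fun ω => (X' ω, Z ω, X ω))
        - ent p (fun ω => (Z ω, X ω)) - ent p (fun ω => (Y ω, X' ω, Z ω, X ω)) :=
    cmi_ent hp Y X' _
  have w5 : cmi p X' Y Z
      = ent p (fun ω => (X' ω, Z ω)) + ent p (fun ω => (Y ω, Z ω))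
        - ent p Z - ent p (fun ω => (X' ω, Y ω, Z ω)) :=
    cmi_ent hp X' Y Z
  have w6 : cmi p X' X (fun ω => (Y ω, Z ω))
      = ent p (fun ω => (X' ω, Y ω, Z ω)) + ent p (fun ω => (X ω, Y ω, Z ω))
        - ent p (fun ω => (Y ω, Z ω)) - ent p (fun ω => (X' ω, X ω, Y ω, Z ω)) :=
    cmi_ent hp X' X _
  -- nonnegativity
  have n1 : 0 ≤ cmi p Y Z X' := cmi_nonneg hp Y Z X'
  have n2 : 0 ≤ cmi p Y X (fun ω => (Z ω, X' ω)) := cmi_nonneg hp Y X _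
  have n3 : 0 ≤ cmi p Y Z X := cmi_nonneg hp Y Z X
  have n4 : 0 ≤ cmi p Y X' (fun ω => (Z ω, X ω)) := cmi_nonneg hp Y X' _
  have n5 : 0 ≤ cmi p X' Y Z := cmi_nonneg hp X' Y Z
  have n6 : 0 ≤ cmi p X' X (fun ω => (Y ω, Z ω)) := cmi_nonneg hp X' X _
  show ent p Y + ent p Z - ent p (fun ω => (Y ω, Z ω))
      = ent p Y + ent p (fun ω => (X ω, X' ω)) - ent p (fun ω => (Y ω, X ω, X' ω))
  linarith [hrep, hred₁, hred₂, hsuf, r1, r2, r3, r4, r5, r6, r7, r8, r9, r10, r12, r13,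
    z1, z2, z3, z4, w1, w2, w3, w4, w5, w6, n1, n2, n3, n4, n5, n6]
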